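/- Suppose Assumption G holds (each u_i is upper semicontinuous, concave, u_i(x⁰_i) finite, and u_i(x + r·g) > u_i(x) whenever u_i(x) > −∞ and r > 0) and Assumption Z holds: for each i, if u_i(x) > u_i(x') for some x' with u_i(x') > −∞, then u_i(x − ε·g) > −∞ for all sufficiently small ε > 0. If there exists a price vector p ∈ ℝ^J with p·g = 1 such that for every i ∈ I, p·w ≥ p·x⁰_i for all w with u_i(w) ≥ u_i(x⁰_i), then the allocation x⁰ = (x⁰_i)_{i∈I} is Pareto efficient. -/

import Mathlib

open scoped BigOperators
open Metric Filter

noncomputable section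

/-- The inner product `p·y = ∑ j, p j * y j`. -/
def dotp {J : Type*} [Fintype J] (p y : EuclideanSpace ℝ J) : ℝ := ∑ j, p j * y j

/-- A function `u : ℝ^J → ℝ ∪ {±∞}` is concave iff its hypograph is convex. -/
def HypoConcave {J : Type*} [Fintype J] (u : EuclideanSpace ℝ J → EReal) : Prop :=
  Convex ℝ {q : EuclideanSpace ℝ J × ℝ | (q.2 : EReal) ≤ u q.1}

/-- Indifference price function `D(x) = sup {r ∈ ℝ : u(x⁰ + x − r·g) ≥ u(x⁰)}`,
the supremum being taken in `ℝ ∪ {±∞}`. -/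
def indiff {J : Type*} [Fintype J] (u : EuclideanSpace ℝ J → EReal)
    (x0 g x : EuclideanSpace ℝ J) : EReal :=
  sSup {e : EReal | ∃ r : ℝ, e = (r : EReal) ∧ u x0 ≤ u (x0 + x - r • g)}

/-- `p` is a supergradient of `D` at `xb`: `D xb` is finite and
`D x ≤ D xb + p·(x − xb)` for all `x`. -/
def IsSupergradient {J : Type*} [Fintype J] (D : EuclideanSpace ℝ J → EReal)
    (p xb : EuclideanSpace ℝ J) : Prop :=
  D xb ≠ ⊥ ∧ D xb ≠ ⊤ ∧ ∀ x, D x ≤ D xb + ((dotp p (x - xb) : ℝ) : EReal)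

/-- Optimal value `v(z)` of the perturbed market clearing problem `(P_z)`. -/
def marketValue {I J : Type*} [Fintype I] [Fintype J]
    (D : I → EuclideanSpace ℝ J → EReal) (z : EuclideanSpace ℝ J) : EReal :=
  sSup {e : EReal | ∃ x : I → EuclideanSpace ℝ J, (∑ i, x i) = z ∧ e = ∑ i, D i (x i)}

/-- Optimal value of problem `(P')`, the total consumer surplus at allocation `w`. -/
def CSval {I J : Type*} [Fintype I] [Fintype J]
    (u : I → EuclideanSpace ℝ J → EReal) (g : EuclideanSpace ℝ J)
    (w : I → EuclideanSpace ℝ J) : EReal :=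
  sSup {e : EReal | ∃ s : ℝ, e = (s : EReal) ∧ ∃ z : I → EuclideanSpace ℝ J,
    (∑ i, z i) + s • g = ∑ i, w i ∧ ∀ i, u i (w i) ≤ u i (z i)}

/-- Recession function `u^∞(y) = inf_{α>0} (u(x⁰ + α·y) − u(x⁰))/α`. -/
def recession {J : Type*} [Fintype J] (u : EuclideanSpace ℝ J → EReal)
    (x0 y : EuclideanSpace ℝ J) : EReal :=
  sInf {e : EReal | ∃ α : ℝ, 0 < α ∧ e = (u (x0 + α • y) - u x0) / (α : EReal)}

/-- Pareto efficiency of an allocation `x` with total endowment `∑ i, x i`. -/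
def ParetoEfficient {I J : Type*} [Fintype I] [Fintype J]
    (u : I → EuclideanSpace ℝ J → EReal) (x : I → EuclideanSpace ℝ J) : Prop :=
  ¬ ∃ x' : I → EuclideanSpace ℝ J, (∑ i, x' i) = (∑ i, x i) ∧
      (∀ i, u i (x i) ≤ u i (x' i)) ∧ ∃ i, u i (x i) < u i (x' i)

/-! If some allocation were weakly preferred by everybody and strictly by agent `i₀`, Assumption Z
lets us remove a little of the numeraire from `x'_{i₀}`: by concavity the strict preference of
`i₀` survives removing `t • g` for small `t > 0`. The supporting price then values every `x'_i` at
least as much as `x⁰_i`, and `x'_{i₀}` strictly more, contradicting `∑ x' = ∑ x⁰`. -/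

theorem dotp_eq_inner {J : Type*} [Fintype J] (p y : EuclideanSpace ℝ J) :
    dotp p y = inner ℝ p y := by
  simp [dotp, PiLp.inner_apply, mul_comm]

theorem exists_pos_le_sub_smul_of_lt {E : Type*} [AddCommGroup E] [Module ℝ E]
    {u : E → EReal} (hu : Convex ℝ {q : E × ℝ | (q.2 : EReal) ≤ u q.1})
    {x y v : E} (hxy : u x < u y) (hv : u (y - v) ≠ ⊥) :
    ∃ t : ℝ, 0 < t ∧ u x ≤ u (y - t • v) := by
  obtain ⟨c, hxc, hcy⟩ := EReal.lt_iff_exists_real_btwn.mp hxy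
  obtain ⟨a, hca, hay⟩ := EReal.lt_iff_exists_real_btwn.mp hcy
  obtain ⟨b, -, hbv⟩ := EReal.lt_iff_exists_real_btwn.mp (bot_lt_iff_ne_bot.mpr hv)
  have hca : c < a := by exact_mod_cast hca
  have hnear : ∀ᶠ t in nhds (0 : ℝ), t < 1 ∧ c < (1 - t) * a + t * b := by
    have hcont : Continuous fun t : ℝ => (1 - t) * a + t * b := by fun_prop
    exact (eventually_lt_nhds one_pos).and
      (hcont.continuousAt.eventually (lt_mem_nhds (by simpa using hca)))
  obtain ⟨t, ⟨ht1, hct⟩, ht0⟩ :=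
    ((hnear.filter_mono nhdsWithin_le_nhds).and
      (eventually_mem_nhdsWithin (s := Set.Ioi 0))).exists
  have hmem := hu (show (y, a) ∈ _ from hay.le) (show (y - v, b) ∈ _ from hbv.le)
    (sub_nonneg.mpr ht1.le) ht0.le (by ring)
  have hseg : (1 - t) • y + t • (y - v) = y - t • v := by module
  simp only [Set.mem_ofPred_eq, Prod.smul_mk, Prod.mk_add_mk, smul_eq_mul, hseg] at hmem
  exact ⟨t, ht0, hxc.le.trans ((EReal.coe_le_coe_iff.mpr hct.le).trans hmem)⟩

theorem supporting_price_implies_pareto_general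
    {I J : Type*} [Fintype I] [Fintype J]
    (u : I → EuclideanSpace ℝ J → EReal) (g : EuclideanSpace ℝ J)
    (x0 : I → EuclideanSpace ℝ J)
    (hconc : ∀ i, HypoConcave (u i))
    (hfin : ∀ i, u i (x0 i) ≠ ⊥)
    (hZ : ∀ i, ∀ x x' : EuclideanSpace ℝ J, u i x' ≠ ⊥ → u i x' < u i x →
      ∃ ε0 : ℝ, 0 < ε0 ∧ ∀ ε : ℝ, 0 < ε → ε ≤ ε0 → u i (x - ε • g) ≠ ⊥)
    (p : EuclideanSpace ℝ J) (hpg : dotp p g = 1)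
    (hsupp : ∀ i, ∀ w : EuclideanSpace ℝ J, u i (x0 i) ≤ u i w →
      dotp p (x0 i) ≤ dotp p w) :
    ParetoEfficient u x0 := by
  rintro ⟨x', hfeas, hweak, i₀, hstrict⟩
  obtain ⟨ε, hε, hεfin⟩ := hZ i₀ (x' i₀) (x0 i₀) (hfin i₀) hstrict
  obtain ⟨t, ht, hpref⟩ := exists_pos_le_sub_smul_of_lt (hconc i₀) hstrict
    (hεfin ε hε le_rfl)
  have hcheaper : dotp p (x0 i₀) < dotp p (x' i₀) := by
    have hle := hsupp i₀ _ hpref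
    simp only [dotp_eq_inner, inner_sub_right, inner_smul_right] at hle hpg ⊢
    nlinarith [mul_pos ht hε]
  have hvalue : ∑ i, dotp p (x0 i) < ∑ i, dotp p (x' i) :=
    Finset.sum_lt_sum (fun i _ => hsupp i _ (hweak i)) ⟨i₀, Finset.mem_univ _, hcheaper⟩
  simp only [dotp_eq_inner, ← inner_sum, hfeas] at hvalue
  exact lt_irrefl _ hvalue

/-- Corollary ve, second part: existence of a supporting price
vector implies Pareto efficiency. -/
theorem supporting_price_implies_pareto
    {I J : Type*} [Fintype I] [Nonempty I] [Fintype J] [Nonempty J]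
    (u : I → EuclideanSpace ℝ J → EReal) (g : EuclideanSpace ℝ J)
    (x0 : I → EuclideanSpace ℝ J)
    (husc : ∀ i, UpperSemicontinuous (u i))
    (hconc : ∀ i, HypoConcave (u i))
    (hne_top : ∀ i x, u i x ≠ ⊤)
    (hfin : ∀ i, u i (x0 i) ≠ ⊥)
    (hmono : ∀ i, ∀ x : EuclideanSpace ℝ J, ∀ r : ℝ, u i x ≠ ⊥ → 0 < r →
      u i x < u i (x + r • g))
    (hZ : ∀ i, ∀ x x' : EuclideanSpace ℝ J, u i x' ≠ ⊥ → u i x' < u i x →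
      ∃ ε0 : ℝ, 0 < ε0 ∧ ∀ ε : ℝ, 0 < ε → ε ≤ ε0 → u i (x - ε • g) ≠ ⊥)
    (p : EuclideanSpace ℝ J) (hpg : dotp p g = 1)
    (hsupp : ∀ i, ∀ w : EuclideanSpace ℝ J, u i (x0 i) ≤ u i w →
      dotp p (x0 i) ≤ dotp p w) :
    ParetoEfficient u x0 :=
  supporting_price_implies_pareto_general u g x0 hconc hfin hZ p hpg hsupp
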